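/- If x ∈ ℝ^K has strictly positive coordinates summing to 1 (x lies in the open simplex) and β̃, β̃' ∈ ℝ^K both satisfy Σ_j β̃_j = 0 and Σ_j β̃'_j = 0, and if ⟨log x, β̃⟩ = ⟨log x, β̃'⟩ for all such x, then β̃ = β̃'. That is, the log-contrast regression coefficients constrained to sum to zero are identifiable. -/

import Mathlib

/-!
Testing against the softmax point `x = exp v / ∑ exp v` turns `log x` into `v` minus a constant,
and the constant is annihilated by the zero-sum constraint. So `⟨v, b - b'⟩ = 0` for every
`v ∈ ℝ^K`, and `v = b - b'` gives `b = b'`.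
-/

open Finset Real

section Softmax

variable {ι : Type*} [Fintype ι]

noncomputable def softmax (v : ι → ℝ) (j : ι) : ℝ :=
  exp (v j) / ∑ k, exp (v k)

lemma sum_exp_pos [Nonempty ι] (v : ι → ℝ) : 0 < ∑ k, exp (v k) :=
  sum_pos (fun k _ => exp_pos (v k)) univ_nonempty

lemma softmax_pos [Nonempty ι] (v : ι → ℝ) (j : ι) : 0 < softmax v j :=
  div_pos (exp_pos _) (sum_exp_pos v)

lemma sum_softmax [Nonempty ι] (v : ι → ℝ) : ∑ j, softmax v j = 1 := by
  simp_rw [softmax, ← sum_div, div_self (sum_exp_pos v).ne']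

lemma log_softmax [Nonempty ι] (v : ι → ℝ) (j : ι) :
    log (softmax v j) = v j - log (∑ k, exp (v k)) := by
  rw [softmax, log_div (exp_pos _).ne' (sum_exp_pos v).ne', log_exp]

lemma sum_log_softmax_mul_of_sum_eq_zero [Nonempty ι] (v : ι → ℝ) {c : ι → ℝ}
    (hc : ∑ j, c j = 0) : ∑ j, log (softmax v j) * c j = ∑ j, v j * c j := by
  simp only [log_softmax, sub_mul, sum_sub_distrib, ← mul_sum, hc, mul_zero, sub_zero]

end Softmax

theorem eq_zero_of_sum_log_mul_eq_zero_on_simplex {ι : Type*} [Fintype ι] {c : ι → ℝ}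
    (hc : ∑ j, c j = 0)
    (h : ∀ x : ι → ℝ, (∀ j, 0 < x j) → ∑ j, x j = 1 → ∑ j, log (x j) * c j = 0) :
    c = 0 := by
  cases isEmpty_or_nonempty ι
  · exact Subsingleton.elim c 0
  have hcc : ∑ j, c j * c j = 0 := by
    rw [← sum_log_softmax_mul_of_sum_eq_zero c hc]
    exact h (softmax c) (softmax_pos c) (sum_softmax c)
  exact dotProduct_self_eq_zero.mp hcc

theorem stmt7_general (K : ℕ) (b b' : Fin K → ℝ)
    (hb : ∑ j, b j = 0) (hb' : ∑ j, b' j = 0)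
    (h : ∀ x : Fin K → ℝ, (∀ j, 0 < x j) → ∑ j, x j = 1 →
      ∑ j, Real.log (x j) * b j = ∑ j, Real.log (x j) * b' j) :
    b = b' := by
  have hdiff : b - b' = 0 := by
    refine eq_zero_of_sum_log_mul_eq_zero_on_simplex ?_ fun x hx hx1 => ?_
    · simp only [Pi.sub_apply, sum_sub_distrib, hb, hb', sub_zero]
    · simp only [Pi.sub_apply, mul_sub, sum_sub_distrib, h x hx hx1, sub_self]
  exact sub_eq_zero.mp hdiff

/-- Identifiability of log-contrast regression coefficients: if two zero-sum
coefficient vectors give the same value `⟨log x, β̃⟩` for every `x` in the open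
simplex, then they are equal. -/
theorem stmt7 (K : ℕ) (hK : 2 ≤ K) (b b' : Fin K → ℝ)
    (hb : ∑ j, b j = 0) (hb' : ∑ j, b' j = 0)
    (h : ∀ x : Fin K → ℝ, (∀ j, 0 < x j) → ∑ j, x j = 1 →
      ∑ j, Real.log (x j) * b j = ∑ j, Real.log (x j) * b' j) :
    b = b' :=
  stmt7_general K b b' hb hb' h
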